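/- arXiv:2401.04580 — 2 statements merged into one kernel-verified Lean document; each statement's English description precedes it below -/
import Mathlib

section
/- Two bounded probability densities f, g on ℝ^d have the same excess mass transform (f̂(t) = ĝ(t) for all t > 0) if and only if the random variables f(X) and g(Y) have the same distribution, where X has density f and Y has density g. -/
/-!
The law of `f(X)` for `X ∼ f` is the push-forward of `f · volume` under `f`, so its mass on
`[t, ∞)` is `∫_{f ≥ t} f`, which is the excess mass `f̂(t)`. Hence the excess mass transform is
the tail function of that law on `t > 0`, while for `t ≤ 0` the tail is the total mass `1`;
tail functions determine finite measures on `ℝ`.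
-/

open MeasureTheory

section ExcessMass

variable {E : Type*} [MeasurableSpace E] {μ : Measure E} {f : E → ℝ}

theorem map_withDensity_ofReal_Ici (hf : Measurable f) (hf_nonneg : ∀ x, 0 ≤ f x)
    (hf_int : Integrable f μ) (t : ℝ) :
    (μ.withDensity fun x => ENNReal.ofReal (f x)).map f (Set.Ici t) =
      ENNReal.ofReal (∫ x, {x | t ≤ f x}.indicator f x ∂μ) := by
  have hS : MeasurableSet {x | t ≤ f x} := hf measurableSet_Ici
  rw [Measure.map_apply hf measurableSet_Ici, show f ⁻¹' Set.Ici t = {x | t ≤ f x} from rfl,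
    withDensity_apply _ hS, integral_indicator hS,
    ofReal_integral_eq_lintegral_ofReal hf_int.restrict (.of_forall hf_nonneg)]

theorem integral_indicator_le_eq_toReal_map_withDensity (hf : Measurable f)
    (hf_nonneg : ∀ x, 0 ≤ f x) (hf_int : Integrable f μ) (t : ℝ) :
    ∫ x, {x | t ≤ f x}.indicator f x ∂μ =
      ((μ.withDensity fun x => ENNReal.ofReal (f x)).map f (Set.Ici t)).toReal := by
  rw [map_withDensity_ofReal_Ici hf hf_nonneg hf_int, ENNReal.toReal_ofReal]
  exact integral_nonneg <| Set.indicator_nonneg fun x _ => hf_nonneg x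

theorem map_withDensity_ofReal_Ici_of_nonpos (hf : Measurable f) (hf_nonneg : ∀ x, 0 ≤ f x)
    (hf_int : Integrable f μ) {t : ℝ} (ht : t ≤ 0) :
    (μ.withDensity fun x => ENNReal.ofReal (f x)).map f (Set.Ici t) =
      ENNReal.ofReal (∫ x, f x ∂μ) := by
  have hS : {x | t ≤ f x} = Set.univ := Set.eq_univ_of_forall fun x => ht.trans (hf_nonneg x)
  rw [map_withDensity_ofReal_Ici hf hf_nonneg hf_int, hS, Set.indicator_univ]

end ExcessMass

theorem stmt_2_general {d : ℕ} (f g : EuclideanSpace ℝ (Fin d) → ℝ)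
    (hf_meas : Measurable f) (hg_meas : Measurable g)
    (hf_nonneg : ∀ x, 0 ≤ f x) (hg_nonneg : ∀ x, 0 ≤ g x)
    (hf_int : Integrable f) (hg_int : Integrable g)
    (hf_prob : ∫ x, f x = 1) (hg_prob : ∫ x, g x = 1)
    (fhat ghat : ℝ → ℝ)
    (hfhat : fhat = fun t => ∫ x, Set.indicator {x | t ≤ f x} f x)
    (hghat : ghat = fun t => ∫ x, Set.indicator {x | t ≤ g x} g x) :
    (∀ t : ℝ, 0 < t → fhat t = ghat t) ↔
      Measure.map f (MeasureTheory.volume.withDensity fun x => ENNReal.ofReal (f x)) =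
      Measure.map g (MeasureTheory.volume.withDensity fun x => ENNReal.ofReal (g x)) := by
  subst hfhat hghat
  constructor
  · intro h
    have := isFiniteMeasure_withDensity_ofReal hf_int.hasFiniteIntegral
    refine Measure.ext_of_Ici _ _ fun t => ?_
    rcases le_or_gt t 0 with ht | ht
    · rw [map_withDensity_ofReal_Ici_of_nonpos hf_meas hf_nonneg hf_int ht,
        map_withDensity_ofReal_Ici_of_nonpos hg_meas hg_nonneg hg_int ht, hf_prob, hg_prob]
    · rw [map_withDensity_ofReal_Ici hf_meas hf_nonneg hf_int,
        map_withDensity_ofReal_Ici hg_meas hg_nonneg hg_int]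
      exact congrArg ENNReal.ofReal (h t ht)
  · intro h t _
    simp only [integral_indicator_le_eq_toReal_map_withDensity hf_meas hf_nonneg hf_int,
      integral_indicator_le_eq_toReal_map_withDensity hg_meas hg_nonneg hg_int, h]

/-- Two bounded probability densities `f, g` on `ℝ^d` have the same excess mass transform
iff the random variables `f(X)` and `g(Y)` (with `X ∼ f`, `Y ∼ g`) have the same distribution. -/
theorem stmt_2 {d : ℕ} (f g : EuclideanSpace ℝ (Fin d) → ℝ)
    (hf_meas : Measurable f) (hg_meas : Measurable g)
    (hf_nonneg : ∀ x, 0 ≤ f x) (hg_nonneg : ∀ x, 0 ≤ g x)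
    (hf_bdd : ∃ C, ∀ x, f x ≤ C) (hg_bdd : ∃ C, ∀ x, g x ≤ C)
    (hf_int : Integrable f) (hg_int : Integrable g)
    (hf_prob : ∫ x, f x = 1) (hg_prob : ∫ x, g x = 1)
    (fhat ghat : ℝ → ℝ)
    (hfhat : fhat = fun t => ∫ x, Set.indicator {x | t ≤ f x} f x)
    (hghat : ghat = fun t => ∫ x, Set.indicator {x | t ≤ g x} g x) :
    (∀ t : ℝ, 0 < t → fhat t = ghat t) ↔
      Measure.map f (MeasureTheory.volume.withDensity fun x => ENNReal.ofReal (f x)) =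
      Measure.map g (MeasureTheory.volume.withDensity fun x => ENNReal.ofReal (g x)) :=
  stmt_2_general f g hf_meas hg_meas hf_nonneg hg_nonneg hf_int hg_int hf_prob hg_prob fhat ghat
    hfhat hghat
end

section
/- For the two-dimensional standard normal density f(x) = (1/2π) exp(−|x|²/2), the transform formula yields EECC equal to exp(−Λ/(2π)): that is, ∫_{ℝ²} f(x) e^{-Λ f(x)} (1 − Λ f(x)) dx = e^{−Λ/(2π)} for each Λ > 0. -/
open MeasureTheory Real Set Filter Topology

/-! With `u(r) = c e^{-r²/2}` one has `u' = -r u`, so in polar coordinates the radial integrand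
`r u φ'(u)` is `-(φ ∘ u)'` and the integral telescopes to `2π (φ c - φ 0)`. The claim is the case
`φ t = t e^{-Λ t}`, `c = 1/(2π)`. -/

theorem integral_fun_norm_euclideanSpace_fin_two (g : ℝ → ℝ) :
    ∫ x : EuclideanSpace ℝ (Fin 2), g ‖x‖ = 2 * π * ∫ r in Ioi 0, r * g r := by
  rw [integral_fun_norm_addHaar, measureReal_def, EuclideanSpace.volume_ball_fin_two,
    finrank_euclideanSpace_fin]
  simp [ENNReal.toReal_ofReal pi_pos.le]
  ring

section GaussianProfile

variable {φ φ' : ℝ → ℝ}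

theorem hasDerivAt_comp_gaussian (hφ : ∀ t, HasDerivAt φ (φ' t) t) (c r : ℝ) :
    HasDerivAt (fun s => φ (c * exp (-s ^ 2 / 2)))
      (-(r * (c * exp (-r ^ 2 / 2) * φ' (c * exp (-r ^ 2 / 2))))) r := by
  have hexp : HasDerivAt (fun s => -s ^ 2 / 2) (-r) r := by
    refine ((hasDerivAt_pow 2 r).neg.div_const 2).congr_deriv ?_
    push_cast; ring
  refine ((hφ _).comp r (hexp.exp.const_mul c)).congr_deriv ?_
  ring

theorem tendsto_gaussian_atTop (c : ℝ) :
    Tendsto (fun r => c * exp (-r ^ 2 / 2)) atTop (𝓝 0) := by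
  have h : Tendsto (fun r : ℝ => -r ^ 2 / 2) atTop atBot :=
    (tendsto_neg_atBot_iff.mpr (tendsto_pow_atTop two_ne_zero)).atBot_div_const two_pos
  simpa using (tendsto_exp_atBot.comp h).const_mul c

theorem integrableOn_mul_gaussian_mul_comp (hφ' : Continuous φ') (c : ℝ) :
    IntegrableOn (fun r => r * (c * exp (-r ^ 2 / 2) * φ' (c * exp (-r ^ 2 / 2)))) (Ioi 0) := by
  obtain ⟨M, hM⟩ := (isCompact_closedBall (0 : ℝ) |c|).exists_bound_of_continuousOn
    hφ'.continuousOn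
  have hbase := (integrable_mul_exp_neg_mul_sq (b := 1 / 2) one_half_pos).norm.const_mul (|c| * M)
  refine (hbase.mono' ?_ (ae_of_all _ fun r => ?_)).integrableOn
  · fun_prop
  have hexp : exp (-r ^ 2 / 2) ≤ 1 := exp_le_one_iff.mpr (by nlinarith [sq_nonneg r])
  have hmem : c * exp (-r ^ 2 / 2) ∈ Metric.closedBall 0 |c| := by
    simpa [abs_mul, abs_of_pos (exp_pos _)] using
      mul_le_of_le_one_right (abs_nonneg c) hexp
  have hr : -(1 / 2) * r ^ 2 = -r ^ 2 / 2 := by ring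
  calc ‖r * (c * exp (-r ^ 2 / 2) * φ' (c * exp (-r ^ 2 / 2)))‖
      = |r| * exp (-r ^ 2 / 2) * |c| * ‖φ' (c * exp (-r ^ 2 / 2))‖ := by
        simp only [norm_mul, Real.norm_eq_abs, abs_of_pos (exp_pos _)]; ring
    _ ≤ |r| * exp (-r ^ 2 / 2) * |c| * M := by gcongr; exact hM _ hmem
    _ = |c| * M * ‖r * exp (-(1 / 2) * r ^ 2)‖ := by
        rw [hr, norm_mul, Real.norm_eq_abs, Real.norm_eq_abs, abs_of_pos (exp_pos _)]; ring

theorem integral_Ioi_mul_gaussian_mul_comp (hφ : ∀ t, HasDerivAt φ (φ' t) t)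
    (hφ' : Continuous φ') (c : ℝ) :
    ∫ r in Ioi 0, r * (c * exp (-r ^ 2 / 2) * φ' (c * exp (-r ^ 2 / 2))) = φ c - φ 0 := by
  have hF := hasDerivAt_comp_gaussian hφ c
  have hlim : Tendsto (fun r => φ (c * exp (-r ^ 2 / 2))) atTop (𝓝 (φ 0)) :=
    ((hφ 0).continuousAt.tendsto).comp (tendsto_gaussian_atTop c)
  have h := integral_Ioi_of_hasDerivAt_of_tendsto (hF 0).continuousAt.continuousWithinAt
    (fun r _ => hF r) (integrableOn_mul_gaussian_mul_comp hφ' c).neg hlim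
  rw [integral_neg] at h
  norm_num at h
  linarith

theorem integral_gaussian_mul_comp_euclideanSpace_fin_two (hφ : ∀ t, HasDerivAt φ (φ' t) t)
    (hφ' : Continuous φ') (c : ℝ) :
    ∫ x : EuclideanSpace ℝ (Fin 2), c * exp (-‖x‖ ^ 2 / 2) * φ' (c * exp (-‖x‖ ^ 2 / 2)) =
      2 * π * (φ c - φ 0) := by
  rw [integral_fun_norm_euclideanSpace_fin_two
    (fun r => c * exp (-r ^ 2 / 2) * φ' (c * exp (-r ^ 2 / 2))),
    integral_Ioi_mul_gaussian_mul_comp hφ hφ' c]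

end GaussianProfile

theorem hasDerivAt_mul_exp_neg_mul (Λ t : ℝ) :
    HasDerivAt (fun s => s * exp (-(Λ * s))) (exp (-(Λ * t)) * (1 - Λ * t)) t := by
  refine ((hasDerivAt_id t).mul ((hasDerivAt_id t).const_mul Λ).neg.exp).congr_deriv ?_
  simp only [id, mul_one, Pi.neg_apply]; ring

/-- For the 2D standard normal density `f(x) = (1/2π) exp(−|x|²/2)`, the transform formula
yields `∫ f(x) e^{-Λ f(x)} (1 − Λ f(x)) dx = e^{−Λ/(2π)}` for every `Λ > 0`. -/
theorem stmt_10 (f : EuclideanSpace ℝ (Fin 2) → ℝ)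
    (hf : f = fun x => (1 / (2 * π)) * Real.exp (-‖x‖ ^ 2 / 2)) :
    ∀ Λ : ℝ, 0 < Λ →
      ∫ x, f x * (Real.exp (-(Λ * f x)) * (1 - Λ * f x)) =
        Real.exp (-(Λ / (2 * π))) := by
  intro Λ _
  subst hf
  rw [integral_gaussian_mul_comp_euclideanSpace_fin_two (hasDerivAt_mul_exp_neg_mul Λ)
    (by fun_prop) (1 / (2 * π))]
  field_simp
  simp
end
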